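/- arXiv:1005.4421 — 2 statements merged into one kernel-verified Lean document; each statement's English description precedes it below -/
import Mathlib

section
/- Define K_n for n ≥ 2 by the recurrence ((n−1)/2)·K_n = ∑_{m=2}^{n−1} K_m − (2n+1)(n−1)/n. Then for |t| < 1, ∑_{n=2}^∞ K_n tⁿ = 2t(1 − 2Li₂(t))/(1−t)² + 2(1+t)ln(1−t)/(1−t), where Li₂(t) = ∑_{k=1}^∞ tᵏ/k² is the dilogarithm. -/
open Finset

noncomputable def Hs2 (n : ℕ) : ℝ := ∑ m ∈ Finset.range (n+1), 1/((m:ℝ))^2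
noncomputable def Hs1 (n : ℕ) : ℝ := ∑ m ∈ Finset.range (n+1), 1/((m:ℝ))
lemma Hs2_succ (n : ℕ) : Hs2 (n+1) = Hs2 n + 1/((n:ℝ)+1)^2 := by
  simp [Hs2, Finset.sum_range_succ]
lemma Hs1_succ (n : ℕ) : Hs1 (n+1) = Hs1 n + 1/((n:ℝ)+1) := by
  simp [Hs1, Finset.sum_range_succ]

/-- The dilogarithm `Li₂(t) = ∑_{k≥1} tᵏ/k²`. -/
noncomputable def Li2 (t : ℝ) : ℝ := ∑' k : ℕ, t ^ (k + 1) / ((k : ℝ) + 1) ^ 2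

-- general Cauchy product HasSum
lemma hasSum_cauchy {f g : ℕ → ℝ} {A B : ℝ} (hf : HasSum f A) (hg : HasSum g B)
    (hf' : Summable fun n => ‖f n‖) (hg' : Summable fun n => ‖g n‖) :
    HasSum (fun n => ∑ k ∈ Finset.range (n+1), f k * g (n - k)) (A * B) := by
  have hs := summable_sum_mul_range_of_summable_norm' hf' hf.summable hg' hg.summable
  have ht := tsum_mul_tsum_eq_tsum_sum_range_of_summable_norm hf' hg'
  rw [hf.tsum_eq, hg.tsum_eq] at ht
  have := hs.hasSum
  rwa [← ht] at this

section
variable {t : ℝ}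

lemma tnorm (ht : |t| < 1) : ‖t‖ < 1 := by rwa [Real.norm_eq_abs]

lemma summable_aux (ht : |t| < 1) (u : ℕ → ℝ) (hu : ∀ k, |u k| ≤ 1) :
    Summable fun k => ‖u k * t ^ k‖ := by
  have hg : Summable fun k : ℕ => |t| ^ k :=
    summable_geometric_of_lt_one (abs_nonneg t) ht
  refine hg.of_nonneg_of_le (fun k => norm_nonneg _) fun k => ?_
  rw [Real.norm_eq_abs, abs_mul, abs_pow]
  calc |u k| * |t| ^ k ≤ 1 * |t| ^ k := by gcongr; exact hu k
    _ = |t| ^ k := one_mul _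

lemma summable_aux2 (ht : |t| < 1) (u : ℕ → ℝ) (hu : ∀ k, |u k| ≤ (k:ℝ) + 1) :
    Summable fun k => ‖u k * t ^ k‖ := by
  have h1 : Summable fun k : ℕ => (k:ℝ) * |t| ^ k :=
    (hasSum_coe_mul_geometric_of_norm_lt_one (r := |t|) (by rwa [Real.norm_eq_abs, abs_abs])).summable
  have h2 : Summable fun k : ℕ => |t| ^ k :=
    summable_geometric_of_lt_one (abs_nonneg t) ht
  have hg : Summable fun k : ℕ => ((k:ℝ) + 1) * |t| ^ k := by
    have := h1.add h2
    refine this.congr fun k => ?_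
    ring
  refine hg.of_nonneg_of_le (fun k => norm_nonneg _) fun k => ?_
  rw [Real.norm_eq_abs, abs_mul, abs_pow]
  exact mul_le_mul_of_nonneg_right (hu k) (by positivity)

lemma coeff_aux (u : ℕ → ℝ) (n : ℕ) :
    ∑ k ∈ range (n+1), (u k * t^k) * t^(n-k) = (∑ k ∈ range (n+1), u k) * t^n := by
  rw [Finset.sum_mul]
  apply Finset.sum_congr rfl
  intro k hk
  rw [Finset.mem_range] at hk
  rw [mul_assoc, ← pow_add]
  congr 2
  omega

lemma hS2 (ht : |t| < 1) : HasSum (fun k : ℕ => (1/((k:ℝ))^2) * t ^ k) (Li2 t) := by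
  have hsum : Summable fun k : ℕ => (1/((k:ℝ))^2) * t ^ k := by
    refine (summable_aux ht _ fun k => ?_).of_norm
    rcases Nat.eq_zero_or_pos k with h | h
    · simp [h]
    · rw [abs_of_nonneg (by positivity)]
      rw [div_le_one (by positivity)]
      have : (1:ℝ) ≤ (k:ℝ) := by exact_mod_cast h
      nlinarith
  have h := hsum.hasSum
  have heq : (∑' k : ℕ, (1/((k:ℝ))^2) * t ^ k) = Li2 t := by
    rw [Summable.tsum_eq_zero_add hsum]
    simp only [Nat.cast_zero, Li2]
    rw [show (1/((0:ℝ))^2) * t ^ 0 = 0 by norm_num]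
    rw [zero_add]
    apply tsum_congr
    intro k
    push_cast
    ring
  rwa [heq] at h

lemma hS1 (ht : |t| < 1) : HasSum (fun k : ℕ => (1/((k:ℝ))) * t ^ k) (-Real.log (1 - t)) := by
  have h0 := Real.hasSum_pow_div_log_of_abs_lt_one ht
  refine (hasSum_nat_add_iff' (f := fun k : ℕ => (1/((k:ℝ))) * t ^ k) 1).mp ?_
  rw [show (∑ i ∈ range 1, (1/((i:ℝ))) * t ^ i) = 0 by norm_num, sub_zero]
  have heq : ∀ n : ℕ, (1/(((n:ℕ)+1:ℕ):ℝ)) * t ^ (n+1) = t^(n+1)/((n:ℝ)+1) := by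
    intro n; push_cast; ring
  simp only [heq]
  exact h0

lemma geomsum (ht : |t| < 1) : HasSum (fun n : ℕ => t ^ n) (1 - t)⁻¹ :=
  hasSum_geometric_of_norm_lt_one (by rwa [Real.norm_eq_abs])

lemma geom_norm_summable (ht : |t| < 1) : Summable fun n : ℕ => ‖t ^ n‖ := by
  simpa [Real.norm_eq_abs, abs_pow] using summable_geometric_of_lt_one (abs_nonneg t) ht

lemma u2_bound : ∀ k : ℕ, |1/((k:ℝ))^2| ≤ 1 := by
  intro k
  rcases Nat.eq_zero_or_pos k with h | h
  · simp [h]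
  · have : (1:ℝ) ≤ (k:ℝ) := by exact_mod_cast h
    rw [abs_of_nonneg (by positivity), div_le_one (by positivity)]
    nlinarith

lemma u1_bound : ∀ k : ℕ, |1/((k:ℝ))| ≤ 1 := by
  intro k
  rcases Nat.eq_zero_or_pos k with h | h
  · simp [h]
  · have : (1:ℝ) ≤ (k:ℝ) := by exact_mod_cast h
    rw [abs_of_nonneg (by positivity), div_le_one (by positivity)]
    linarith

lemma hP2 (ht : |t| < 1) : HasSum (fun n : ℕ => Hs2 n * t ^ n) (Li2 t * (1 - t)⁻¹) := by
  have h := hasSum_cauchy (hS2 ht) (geomsum ht)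
    (summable_aux ht _ u2_bound) (geom_norm_summable ht)
  have e : (fun n : ℕ => ∑ k ∈ range (n+1), (1/((k:ℝ))^2 * t ^ k) * t ^ (n - k))
      = fun n : ℕ => Hs2 n * t ^ n := by
    funext n
    unfold Hs2
    exact coeff_aux (fun k => 1/((k:ℝ))^2) n
  rwa [e] at h

lemma hP1 (ht : |t| < 1) :
    HasSum (fun n : ℕ => Hs1 n * t ^ n) (-Real.log (1 - t) * (1 - t)⁻¹) := by
  have h := hasSum_cauchy (hS1 ht) (geomsum ht)
    (summable_aux ht _ u1_bound) (geom_norm_summable ht)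
  have e : (fun n : ℕ => ∑ k ∈ range (n+1), (1/((k:ℝ)) * t ^ k) * t ^ (n - k))
      = fun n : ℕ => Hs1 n * t ^ n := by
    funext n
    unfold Hs1
    exact coeff_aux (fun k => 1/((k:ℝ))) n
  rwa [e] at h

lemma Hs2_le (n : ℕ) : |Hs2 n| ≤ (n:ℝ) + 1 := by
  have h1 : Hs2 n ≤ ∑ m ∈ Finset.range (n+1), (1:ℝ) :=
    Finset.sum_le_sum fun m _ => (abs_le.mp (u2_bound m)).2
  have h2 : 0 ≤ Hs2 n := Finset.sum_nonneg fun m _ => by positivity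
  rw [abs_of_nonneg h2]
  simpa using h1

lemma hP3 (ht : |t| < 1) :
    HasSum (fun n : ℕ => (∑ m ∈ range (n+1), Hs2 m) * t ^ n)
      (Li2 t * (1 - t)⁻¹ * (1 - t)⁻¹) := by
  have h := hasSum_cauchy (hP2 ht) (geomsum ht)
    (summable_aux2 ht _ Hs2_le) (geom_norm_summable ht)
  have e : (fun n : ℕ => ∑ k ∈ range (n+1), (Hs2 k * t ^ k) * t ^ (n - k))
      = fun n : ℕ => (∑ m ∈ range (n+1), Hs2 m) * t ^ n := by
    funext n
    exact coeff_aux Hs2 n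
  rwa [e] at h

lemma sumHs2 (n : ℕ) : ∑ m ∈ range (n+1), Hs2 m = ((n:ℝ)+1) * Hs2 n - Hs1 n := by
  induction n with
  | zero => simp [Hs2, Hs1]
  | succ n ih =>
    rw [Finset.sum_range_succ, ih, Hs2_succ, Hs1_succ]
    have hn1 : ((n:ℝ)+1) ≠ 0 := by positivity
    push_cast
    field_simp
    ring

lemma hnH2 (ht : |t| < 1) :
    HasSum (fun n : ℕ => (n:ℝ) * Hs2 n * t ^ n)
      (Li2 t * (1 - t)⁻¹ * (1 - t)⁻¹ + -Real.log (1 - t) * (1 - t)⁻¹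
        - Li2 t * (1 - t)⁻¹) := by
  have h := ((hP3 ht).add (hP1 ht)).sub (hP2 ht)
  have e : (fun n : ℕ => ((∑ m ∈ range (n+1), Hs2 m) * t ^ n + Hs1 n * t ^ n)
        - Hs2 n * t ^ n) = fun n : ℕ => (n:ℝ) * Hs2 n * t ^ n := by
    funext n
    rw [sumHs2 n]
    ring
  rwa [e] at h

lemma Kform (K : ℕ → ℝ)
    (hK : ∀ n : ℕ, 2 ≤ n →
      (((n : ℝ) - 1) / 2) * K n
        = (∑ m ∈ Finset.Ico 2 n, K m) - (2 * (n : ℝ) + 1) * ((n : ℝ) - 1) / (n : ℝ)) :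
    ∀ n : ℕ, 2 ≤ n → K n = 2*(n:ℝ) - 4*(n:ℝ)*Hs2 n + 2/(n:ℝ) := by
  intro n hn
  induction n, hn using Nat.le_induction with
  | base =>
    have h := hK 2 le_rfl
    norm_num at h
    have : K 2 = -5 := by linarith
    norm_num [Hs2, Finset.sum_range_succ, this]
  | succ n hn ih =>
    have h1 := hK n hn
    have h2 := hK (n+1) (by omega)
    rw [Finset.sum_Ico_succ_top hn] at h2
    have hn0 : (n:ℝ) ≠ 0 := by positivity
    have hn1 : (n:ℝ)+1 ≠ 0 := by positivity
    push_cast at h1 h2 ⊢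
    rw [Hs2_succ]
    rw [ih] at h1 h2
    -- solve for K (n+1) from h2, using h1 to replace the Ico sum
    have hsum : (∑ m ∈ Finset.Ico 2 n, K m)
        = ((n:ℝ)-1)/2 * (2*(n:ℝ) - 4*(n:ℝ)*Hs2 n + 2/(n:ℝ)) + (2*(n:ℝ)+1)*((n:ℝ)-1)/(n:ℝ) := by
      linarith [h1]
    rw [hsum] at h2
    have h3 : K (n+1) = (2/(n:ℝ)) * ((((n:ℝ)+1) - 1) / 2 * K (n+1)) := by
      field_simp
      ring
    rw [h3, h2]
    field_simp
    ring_nf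

end

/-- Generating function of the sequence `K_n` defined by
`((n−1)/2)K_n = ∑_{m=2}^{n−1} K_m − (2n+1)(n−1)/n`. -/
theorem stmt_14 (K : ℕ → ℝ)
    (hK : ∀ n : ℕ, 2 ≤ n →
      (((n : ℝ) - 1) / 2) * K n
        = (∑ m ∈ Finset.Ico 2 n, K m) - (2 * (n : ℝ) + 1) * ((n : ℝ) - 1) / (n : ℝ)) :
    ∀ t : ℝ, |t| < 1 →
      HasSum (fun n : ℕ => K (n + 2) * t ^ (n + 2))
        (2 * t * (1 - 2 * Li2 t) / (1 - t) ^ 2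
          + 2 * (1 + t) * Real.log (1 - t) / (1 - t)) := by
  intro t ht
  have hform := Kform K hK
  have h1t : (0:ℝ) < 1 - t := by
    have := abs_lt.mp ht
    linarith [this.2]
  have h1t' : (1:ℝ) - t ≠ 0 := ne_of_gt h1t
  have hA := (hasSum_coe_mul_geometric_of_norm_lt_one (r := t)
    (by rwa [Real.norm_eq_abs])).mul_left 2
  have hB := (hnH2 ht).mul_left 4
  have hC := (hS1 ht).mul_left 2
  have hg := (hA.sub hB).add hC
  set f : ℕ → ℝ := fun n =>
    2 * ((n:ℝ) * t ^ n) - 4 * ((n:ℝ) * Hs2 n * t ^ n) + 2 * (1/((n:ℝ)) * t ^ n) with hf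
  set Sg : ℝ := 2 * (t / (1 - t) ^ 2)
      - 4 * (Li2 t * (1 - t)⁻¹ * (1 - t)⁻¹ + -Real.log (1 - t) * (1 - t)⁻¹
        - Li2 t * (1 - t)⁻¹)
      + 2 * -Real.log (1 - t) with hSg
  have hgf : HasSum f Sg := hg
  have hshift := (hasSum_nat_add_iff' (f := f) 2).mpr hgf
  have hzero : ∑ i ∈ Finset.range 2, f i = 0 := by
    rw [Finset.sum_range_succ, Finset.sum_range_succ, Finset.sum_range_zero]
    norm_num [hf, Hs2, Finset.sum_range_succ]
    ring
  rw [hzero, sub_zero] at hshift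
  have efun : (fun n : ℕ => K (n + 2) * t ^ (n + 2)) = fun n : ℕ => f (n + 2) := by
    funext n
    rw [hform (n+2) (by omega), hf]
    push_cast
    ring
  rw [efun]
  have hval : Sg = 2 * t * (1 - 2 * Li2 t) / (1 - t) ^ 2
      + 2 * (1 + t) * Real.log (1 - t) / (1 - t) := by
    rw [hSg]
    field_simp
    ring
  rwa [hval] at hshift
end

section
/- Let K_n (n ≥ 2) satisfy ((n−1)/2)K_n = ∑_{m=2}^{n−1}K_m − (2n+1)(n−1)/n, and define L_n (n ≥ 2) by ((n−1)/2)L_n = ∑_{m=2}^{n−1}L_m + ∑_{m=2}^{n−1}(n−m)K_m − (2n+1)(n−1). Then for |t| < 1, ∑_{n=2}^∞ L_n tⁿ = 2t(1+t)(t − 2Li₂(t))/(1−t)³ + 8t·ln(1−t)/(1−t)². -/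
open Finset

namespace S15


/-- partial sums of `1/k²`. -/
noncomputable def Hs (n : ℕ) : ℝ := ∑ j ∈ Finset.range n, 1 / ((j : ℝ) + 1) ^ 2

noncomputable def Lc (n : ℕ) : ℝ := 2 + 2 * (n : ℝ) ^ 2 - 4 * (n : ℝ) ^ 2 * Hs n

noncomputable def Kc (n : ℕ) : ℝ := Lc n / n

lemma Hs_succ (n : ℕ) : Hs (n + 1) = Hs n + 1 / ((n : ℝ) + 1) ^ 2 := by
  simp [Hs, Finset.sum_range_succ]

lemma sumK : ∀ n : ℕ, 2 ≤ n →
    ∑ m ∈ Finset.Ico 2 n, Kc m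
      = (((n : ℝ) - 1) / 2) * Kc n + (2 * (n : ℝ) + 1) * ((n : ℝ) - 1) / n := by
  intro n hn
  induction n, hn using Nat.le_induction with
  | base =>
    have : Hs 2 = 1 + 1/4 := by norm_num [Hs, Finset.sum_range_succ]
    simp [Kc, Lc, this]
    norm_num
  | succ n hn ih =>
    rw [Finset.sum_Ico_succ_top (by omega), ih]
    have hn0 : (n : ℝ) ≠ 0 := by positivity
    have hn1 : (n : ℝ) + 1 ≠ 0 := by positivity
    simp only [Kc, Lc, Hs_succ, Nat.cast_succ]
    field_simp
    ring

lemma sumL : ∀ n : ℕ, 2 ≤ n →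
    (∑ m ∈ Finset.Ico 2 n, Lc m) + (∑ m ∈ Finset.Ico 2 n, ((n : ℝ) - (m : ℝ)) * Kc m)
      = (((n : ℝ) - 1) / 2) * Lc n + (2 * (n : ℝ) + 1) * ((n : ℝ) - 1) := by
  intro n hn
  induction n, hn using Nat.le_induction with
  | base =>
    have : Hs 2 = 1 + 1/4 := by norm_num [Hs, Finset.sum_range_succ]
    simp [Lc, this]
    norm_num
  | succ n hn ih =>
    have hsplit : ∑ m ∈ Finset.Ico 2 (n+1), (((n:ℝ)+1) - (m : ℝ)) * Kc m
        = (∑ m ∈ Finset.Ico 2 n, ((n : ℝ) - (m : ℝ)) * Kc m)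
          + (∑ m ∈ Finset.Ico 2 n, Kc m) + Kc n := by
      rw [Finset.sum_Ico_succ_top (by omega), ← Finset.sum_add_distrib]
      ring_nf
    rw [Finset.sum_Ico_succ_top (a := 2) (b := n) (by omega)]
    push_cast
    rw [hsplit, sumK n hn]
    have h2 : (∑ m ∈ Finset.Ico 2 n, Lc m) = (((n : ℝ) - 1) / 2) * Lc n + (2 * (n : ℝ) + 1) * ((n : ℝ) - 1)
        - (∑ m ∈ Finset.Ico 2 n, ((n : ℝ) - (m : ℝ)) * Kc m) := by
      rw [← ih]; ring
    rw [h2]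
    have hn0 : (n : ℝ) ≠ 0 := by positivity
    have hn1 : (n : ℝ) + 1 ≠ 0 := by positivity
    simp only [Kc, Lc, Hs_succ, Nat.cast_succ]
    field_simp
    ring

lemma uniq (K L : ℕ → ℝ)
    (hK : ∀ n : ℕ, 2 ≤ n →
      (((n : ℝ) - 1) / 2) * K n
        = (∑ m ∈ Finset.Ico 2 n, K m) - (2 * (n : ℝ) + 1) * ((n : ℝ) - 1) / (n : ℝ))
    (hL : ∀ n : ℕ, 2 ≤ n →
      (((n : ℝ) - 1) / 2) * L n
        = (∑ m ∈ Finset.Ico 2 n, L m)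
          + (∑ m ∈ Finset.Ico 2 n, ((n : ℝ) - (m : ℝ)) * K m)
          - (2 * (n : ℝ) + 1) * ((n : ℝ) - 1)) :
    ∀ n : ℕ, 2 ≤ n → K n = Kc n ∧ L n = Lc n := by
  intro n
  induction n using Nat.strong_induction_on with
  | _ n ih =>
    intro hn
    have hKs : ∑ m ∈ Finset.Ico 2 n, K m = ∑ m ∈ Finset.Ico 2 n, Kc m :=
      Finset.sum_congr rfl fun m hm => (ih m (Finset.mem_Ico.mp hm).2 (Finset.mem_Ico.mp hm).1).1
    have hLs : ∑ m ∈ Finset.Ico 2 n, L m = ∑ m ∈ Finset.Ico 2 n, Lc m :=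
      Finset.sum_congr rfl fun m hm => (ih m (Finset.mem_Ico.mp hm).2 (Finset.mem_Ico.mp hm).1).2
    have hKws : ∑ m ∈ Finset.Ico 2 n, ((n : ℝ) - (m : ℝ)) * K m
        = ∑ m ∈ Finset.Ico 2 n, ((n : ℝ) - (m : ℝ)) * Kc m :=
      Finset.sum_congr rfl fun m hm => by
        rw [(ih m (Finset.mem_Ico.mp hm).2 (Finset.mem_Ico.mp hm).1).1]
    have hhalf : (((n : ℝ) - 1) / 2) ≠ 0 := by
      have : (2:ℝ) ≤ (n:ℝ) := by exact_mod_cast hn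
      intro h; nlinarith [h]
    constructor
    · have h1 := hK n hn
      rw [hKs, sumK n hn] at h1
      have h2 : (((n : ℝ) - 1) / 2) * K n = (((n : ℝ) - 1) / 2) * Kc n := by linarith
      exact mul_left_cancel₀ hhalf h2
    · have h1 := hL n hn
      rw [hLs, hKws, sumL n hn] at h1
      have h2 : (((n : ℝ) - 1) / 2) * L n = (((n : ℝ) - 1) / 2) * Lc n := by linarith
      exact mul_left_cancel₀ hhalf h2




lemma keyId (n : ℕ) : (n : ℝ) ^ 2 * Hs n
    = (n : ℝ) + 2 * (∑ k ∈ Finset.range (n+1), ((n : ℝ) - (k : ℝ)) / (k : ℝ))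
      + ∑ k ∈ Finset.range (n+1), ((n : ℝ) - (k : ℝ)) ^ 2 / (k : ℝ) ^ 2 := by
  rw [Finset.sum_range_succ' (fun k => ((n : ℝ) - (k : ℝ)) / (k : ℝ)) n,
    Finset.sum_range_succ' (fun k => ((n : ℝ) - (k : ℝ)) ^ 2 / (k : ℝ) ^ 2) n]
  simp only [Nat.cast_zero, div_zero, add_zero, ne_eq, OfNat.ofNat_ne_zero,
    not_false_eq_true, zero_pow, sub_zero]
  have hn : (n : ℝ) = ∑ _i ∈ Finset.range n, (1 : ℝ) := by simp
  rw [Hs, Finset.mul_sum, hn, Finset.mul_sum, ← Finset.sum_add_distrib, ← Finset.sum_add_distrib]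
  apply Finset.sum_congr rfl
  intro i _
  have hi : ((i : ℝ) + 1) ≠ 0 := by positivity
  push_cast
  field_simp
  ring

lemma analytic (t : ℝ) (ht : |t| < 1) :
    HasSum (fun n : ℕ => Lc (n + 2) * t ^ (n + 2))
      (2 * t * (1 + t) * (t - 2 * Li2 t) / (1 - t) ^ 3
        + 8 * t * Real.log (1 - t) / (1 - t) ^ 2) := by
  have h1t : (0:ℝ) < 1 - t := by have := (abs_lt.mp ht).2; linarith
  have h1t' : (1:ℝ) - t ≠ 0 := ne_of_gt h1t
  have htn : ‖t‖ < 1 := by rwa [Real.norm_eq_abs]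
  have habs : |(|t|)| < 1 := by rwa [abs_abs]
  -- norm summability
  have sg : Summable (fun n : ℕ => ‖t ^ n‖) := by
    simpa [Real.norm_eq_abs, abs_pow] using summable_geometric_of_abs_lt_one habs
  have su : Summable (fun n : ℕ => ‖(n : ℝ) * t ^ n‖) := by
    have h := summable_pow_mul_geometric_of_norm_lt_one (R := ℝ) 1 (r := |t|)
      (by rwa [Real.norm_eq_abs, abs_abs])
    refine h.congr fun n => ?_
    rw [Real.norm_eq_abs, abs_mul, abs_pow, Nat.abs_cast]
    ring
  have sv : Summable (fun n : ℕ => ‖(n : ℝ) ^ 2 * t ^ n‖) := by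
    have h := summable_pow_mul_geometric_of_norm_lt_one (R := ℝ) 2 (r := |t|)
      (by rwa [Real.norm_eq_abs, abs_abs])
    refine h.congr fun n => ?_
    rw [Real.norm_eq_abs, abs_mul, abs_pow, abs_pow, Nat.abs_cast]
  have sw : Summable (fun n : ℕ => ‖t ^ n / (n : ℝ)‖) := by
    refine Summable.of_nonneg_of_le (fun n => norm_nonneg _) (fun n => ?_)
      (by simpa [Real.norm_eq_abs, abs_pow] using summable_geometric_of_abs_lt_one habs : Summable (fun n : ℕ => |t| ^ n))
    rw [Real.norm_eq_abs, abs_div, abs_pow, Nat.abs_cast]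
    match n with
    | 0 => simp
    | (m+1) => exact div_le_self (by positivity) (by exact_mod_cast Nat.one_le_iff_ne_zero.mpr (Nat.succ_ne_zero m))
  have sli : Summable (fun n : ℕ => ‖t ^ n / (n : ℝ) ^ 2‖) := by
    refine Summable.of_nonneg_of_le (fun n => norm_nonneg _) (fun n => ?_)
      (by simpa [Real.norm_eq_abs, abs_pow] using summable_geometric_of_abs_lt_one habs : Summable (fun n : ℕ => |t| ^ n))
    rw [Real.norm_eq_abs, abs_div, abs_pow, abs_pow, Nat.abs_cast]
    match n with
    | 0 => simp
    | (m+1) =>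
      refine div_le_self (by positivity) ?_
      push_cast
      nlinarith [sq_nonneg ((m:ℝ)), Nat.cast_nonneg (α := ℝ) m]
  -- basic HasSums
  have hg : HasSum (fun n : ℕ => t ^ n) ((1 - t)⁻¹) := hasSum_geometric_of_abs_lt_one ht
  have hu : HasSum (fun n : ℕ => (n : ℝ) * t ^ n) (t / (1 - t) ^ 2) :=
    hasSum_coe_mul_geometric_of_norm_lt_one htn
  have hw : HasSum (fun n : ℕ => t ^ n / (n : ℝ)) (-Real.log (1 - t)) := by
    have h := Real.hasSum_pow_div_log_of_abs_lt_one ht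
    have h' : HasSum (fun n : ℕ => t ^ (n+1) / ((n+1 : ℕ) : ℝ))
        (-Real.log (1 - t) - ∑ i ∈ Finset.range 1, t ^ i / (i : ℝ)) := by
      simpa using h
    exact (hasSum_nat_add_iff' 1).mp h'
  have hli0 : HasSum (fun k : ℕ => t ^ (k + 1) / ((k : ℝ) + 1) ^ 2) (Li2 t) := by
    rw [Li2]
    apply Summable.hasSum
    have := (summable_nat_add_iff 1).mpr sli.of_norm
    refine this.congr fun k => ?_
    push_cast
    ring_nf
  have hli : HasSum (fun n : ℕ => t ^ n / (n : ℝ) ^ 2) (Li2 t) := by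
    have h' : HasSum (fun n : ℕ => t ^ (n+1) / ((n+1 : ℕ) : ℝ) ^ 2)
        (Li2 t - ∑ i ∈ Finset.range 1, t ^ i / (i : ℝ) ^ 2) := by
      simp only [Finset.sum_range_one, Nat.cast_zero, pow_zero]
      norm_num
      refine hli0.congr_fun fun k => ?_
      ring_nf
    exact (hasSum_nat_add_iff' 1).mp h'
  -- Cauchy product 1 : u * g  ⇒  series of n(n+1)/2 t^n
  have P1 : HasSum (fun n : ℕ => ((n : ℝ) * ((n : ℝ) + 1) / 2) * t ^ n)
      ((t / (1 - t) ^ 2) * (1 - t)⁻¹) := by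
    have h := hasSum_sum_range_mul_of_summable_norm su sg
    rw [hu.tsum_eq, hg.tsum_eq] at h
    refine h.congr_fun fun n => ?_
    have e : ∀ k ∈ Finset.range (n+1), ((k : ℝ) * t ^ k) * t ^ (n - k) = (k : ℝ) * t ^ n := by
      intro k hk
      rw [mul_assoc, ← pow_add, Nat.add_sub_cancel' (Nat.lt_succ_iff.mp (Finset.mem_range.mp hk))]
    rw [Finset.sum_congr rfl e, ← Finset.sum_mul]
    congr 1
    have h2 := Finset.sum_range_id_mul_two (n + 1)
    have h3 : ((∑ k ∈ Finset.range (n+1), k : ℕ) : ℝ) * 2 = (((n+1) * n : ℕ) : ℝ) := by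
      exact_mod_cast congrArg (Nat.cast (R := ℝ)) h2
    push_cast at h3 ⊢
    linarith
  have hv : HasSum (fun n : ℕ => (n : ℝ) ^ 2 * t ^ n)
      (2 * ((t / (1 - t) ^ 2) * (1 - t)⁻¹) - t / (1 - t) ^ 2) := by
    have h := (P1.mul_left 2).sub hu
    refine h.congr_fun fun n => ?_
    ring
  -- Cauchy product 2 : w * u
  have P2 : HasSum (fun n : ℕ => (∑ k ∈ Finset.range (n+1), ((n : ℝ) - (k : ℝ)) / (k : ℝ)) * t ^ n)
      ((-Real.log (1 - t)) * (t / (1 - t) ^ 2)) := by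
    have h := hasSum_sum_range_mul_of_summable_norm sw su
    rw [hw.tsum_eq, hu.tsum_eq] at h
    refine h.congr_fun fun n => ?_
    rw [Finset.sum_mul]
    refine Finset.sum_congr rfl fun k hk => ?_
    have hkn : k ≤ n := Nat.lt_succ_iff.mp (Finset.mem_range.mp hk)
    have ht' : t ^ k * t ^ (n - k) = t ^ n := by
      rw [← pow_add, Nat.add_sub_cancel' hkn]
    rw [Nat.cast_sub hkn, ← ht']
    ring
  -- Cauchy product 3 : li * v
  have P3 : HasSum
      (fun n : ℕ => (∑ k ∈ Finset.range (n+1), ((n : ℝ) - (k : ℝ)) ^ 2 / (k : ℝ) ^ 2) * t ^ n)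
      (Li2 t * (2 * ((t / (1 - t) ^ 2) * (1 - t)⁻¹) - t / (1 - t) ^ 2)) := by
    have h := hasSum_sum_range_mul_of_summable_norm sli sv
    rw [hli.tsum_eq, hv.tsum_eq] at h
    refine h.congr_fun fun n => ?_
    rw [Finset.sum_mul]
    refine Finset.sum_congr rfl fun k hk => ?_
    have hkn : k ≤ n := Nat.lt_succ_iff.mp (Finset.mem_range.mp hk)
    have ht' : t ^ k * t ^ (n - k) = t ^ n := by
      rw [← pow_add, Nat.add_sub_cancel' hkn]
    rw [Nat.cast_sub hkn, ← ht']
    ring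
  -- total series for Lc
  have total : HasSum (fun n : ℕ => Lc n * t ^ n)
      (2 * (1 - t)⁻¹
        + (2 * (2 * ((t / (1 - t) ^ 2) * (1 - t)⁻¹) - t / (1 - t) ^ 2)
          - 4 * (t / (1 - t) ^ 2
            + (2 * ((-Real.log (1 - t)) * (t / (1 - t) ^ 2))
              + Li2 t * (2 * ((t / (1 - t) ^ 2) * (1 - t)⁻¹) - t / (1 - t) ^ 2))))) := by
    have h := (hg.mul_left 2).add ((hv.mul_left 2).sub ((hu.add ((P2.mul_left 2).add P3)).mul_left 4))
    refine h.congr_fun fun n => ?_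
    have hk := keyId n
    simp only [Lc]
    linear_combination (-4 * t ^ n) * hk
  -- shift by 2
  have hshift := (hasSum_nat_add_iff' (f := fun n : ℕ => Lc n * t ^ n) 2).mpr total
  have hval : ∑ i ∈ Finset.range 2, Lc i * t ^ i = 2 := by
    norm_num [Lc, Hs, Finset.sum_range_succ]
  rw [hval] at hshift
  have hfinal : 2 * t * (1 + t) * (t - 2 * Li2 t) / (1 - t) ^ 3
      + 8 * t * Real.log (1 - t) / (1 - t) ^ 2
      = 2 * (1 - t)⁻¹
        + (2 * (2 * ((t / (1 - t) ^ 2) * (1 - t)⁻¹) - t / (1 - t) ^ 2)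
          - 4 * (t / (1 - t) ^ 2
            + (2 * ((-Real.log (1 - t)) * (t / (1 - t) ^ 2))
              + Li2 t * (2 * ((t / (1 - t) ^ 2) * (1 - t)⁻¹) - t / (1 - t) ^ 2)))) - 2 := by
    field_simp
    ring
  rw [hfinal]
  exact hshift


end S15

/-- Generating function of the sequence `L_n` coupled to `K_n`. -/
theorem stmt_15 (K L : ℕ → ℝ)
    (hK : ∀ n : ℕ, 2 ≤ n →
      (((n : ℝ) - 1) / 2) * K n
        = (∑ m ∈ Finset.Ico 2 n, K m) - (2 * (n : ℝ) + 1) * ((n : ℝ) - 1) / (n : ℝ))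
    (hL : ∀ n : ℕ, 2 ≤ n →
      (((n : ℝ) - 1) / 2) * L n
        = (∑ m ∈ Finset.Ico 2 n, L m)
          + (∑ m ∈ Finset.Ico 2 n, ((n : ℝ) - (m : ℝ)) * K m)
          - (2 * (n : ℝ) + 1) * ((n : ℝ) - 1)) :
    ∀ t : ℝ, |t| < 1 →
      HasSum (fun n : ℕ => L (n + 2) * t ^ (n + 2))
        (2 * t * (1 + t) * (t - 2 * Li2 t) / (1 - t) ^ 3
          + 8 * t * Real.log (1 - t) / (1 - t) ^ 2) := by
  intro t ht
  have heq : (fun n : ℕ => L (n + 2) * t ^ (n + 2))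
      = fun n : ℕ => S15.Lc (n + 2) * t ^ (n + 2) :=
    funext fun n => by rw [(S15.uniq K L hK hL (n + 2) (by omega)).2]
  rw [heq]
  exact S15.analytic t ht
end
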